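/- Let u be the exact solution of ∇·(−k∇u + v u) = f in Ω with u = g on ∂Ω, u_h the SUPG/CGFEM solution, and ũ_{τ,h} the solution of the auxiliary elemental Neumann problem on a triangle τ. Then the total post-processed flux through ∂τ equals the true flux: ∫_{∂τ} (−k∇ũ_{τ,h} + u_h v)·n dl = ∫_{∂τ} (−k∇u + u v)·n dl. -/

import Mathlib

/-!
Summing the boundary condition over the three vertices, the post-processed flux through `∂τ`
equals `Σ_ξ (F^ξ - Q^ξ)`. The nodal basis is a partition of unity with `Σ_ξ ∇φ_ξ = 0`, so the
stiffness and stabilisation terms cancel in the sum and `Σ_ξ F^ξ = ∫_τ f`; by the PDE and the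
divergence theorem this is the true flux.
-/

open MeasureTheory
open scoped RealInnerProductSpace

noncomputable section

/-- The plane ℝ². -/
abbrev E2 : Type := EuclideanSpace ℝ (Fin 2)

/-- Divergence of a vector field on the plane. -/
def vdiv (w : E2 → E2) (x : E2) : ℝ := ∑ i, fderiv ℝ w x (EuclideanSpace.single i 1) i

/-- `F^ξ = ℓ_τ(φ_ξ) = ∫_τ f (φ_ξ + δ v·∇φ_ξ) dx`, the SUPG elemental load. -/
def Fel (f : E2 → ℝ) (v : E2 → E2) (δ : ℝ) (τ : Set E2) (φ : E2 → ℝ) : ℝ :=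
  ∫ x in τ, f x * (φ x + δ * ⟪v x, gradient φ x⟫)

/-- `Q^ξ = a_τ(u_h, φ_ξ)`, the SUPG elemental stiffness contribution. -/
def Qel (k uh : E2 → ℝ) (v : E2 → E2) (δ : ℝ) (τ : Set E2) (φ : E2 → ℝ) : ℝ :=
  ∫ x in τ, (⟪k x • gradient uh x - uh x • v x, gradient φ x⟫
    + δ * vdiv (fun y => -(k y) • gradient uh y + uh y • v y) x * ⟪v x, gradient φ x⟫)

theorem Set.EqOn.aeEq_restrict_of_aestronglyMeasurable {α β : Type*} [MeasurableSpace α]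
    [TopologicalSpace β] [TopologicalSpace.MetrizableSpace β] {μ : Measure α} {s : Set α}
    {F G : α → β} (h : Set.EqOn F G s) (hF : AEStronglyMeasurable F (μ.restrict s))
    (hG : AEStronglyMeasurable G (μ.restrict s)) : F =ᵐ[μ.restrict s] G :=
  (ae_restrict_iff₀ (hF.nullMeasurableSet_eq_fun hG)).2 (ae_of_all _ h)

theorem ContDiff.gradient {F : Type*} [NormedAddCommGroup F] [InnerProductSpace ℝ F]
    [CompleteSpace F] {u : F → ℝ} {m n : WithTop ℕ∞} (hu : ContDiff ℝ n u) (hmn : m + 1 ≤ n) :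
    ContDiff ℝ m (gradient u) :=
  (InnerProductSpace.toDual ℝ F).symm.contDiff.comp (hu.fderiv_right hmn)

theorem ContDiff.continuous_vdiv {w : E2 → E2} (hw : ContDiff ℝ 1 w) : Continuous (vdiv w) := by
  have hDw : Continuous (fderiv ℝ w) := hw.continuous_fderiv one_ne_zero
  unfold vdiv
  fun_prop

section PartitionOfUnity

variable {ι : Type*} [Fintype ι] {τ : Set E2} {φ : ι → E2 → ℝ}

theorem sum_Fel_eq_integral (f : E2 → ℝ) (v : E2 → E2) (δ : ℝ)
    (hpartition : ∀ x ∈ τ, ∑ ξ, φ ξ x = 1) (hgradzero : ∀ x ∈ τ, ∑ ξ, gradient (φ ξ) x = 0)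
    (hf : IntegrableOn f τ)
    (hFint : ∀ ξ, IntegrableOn (fun x => f x * (φ ξ x + δ * ⟪v x, gradient (φ ξ) x⟫)) τ) :
    ∑ ξ, Fel f v δ τ (φ ξ) = ∫ x in τ, f x := by
  unfold Fel
  rw [← integral_finsetSum _ fun ξ _ => hFint ξ]
  refine integral_congr_ae (Set.EqOn.aeEq_restrict_of_aestronglyMeasurable (fun x hx => ?_)
    (integrable_finsetSum _ fun ξ _ => hFint ξ).1 hf.1)
  simp only [mul_add, Finset.sum_add_distrib, ← Finset.mul_sum, ← inner_sum, hpartition x hx,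
    hgradzero x hx, inner_zero_right, mul_zero, mul_one, add_zero]

theorem sum_Qel_eq_zero (k uh : E2 → ℝ) (v : E2 → E2) (δ : ℝ)
    (hgradzero : ∀ x ∈ τ, ∑ ξ, gradient (φ ξ) x = 0)
    (hQint : ∀ ξ, IntegrableOn (fun x =>
      ⟪k x • gradient uh x - uh x • v x, gradient (φ ξ) x⟫
        + δ * vdiv (fun y => -(k y) • gradient uh y + uh y • v y) x
            * ⟪v x, gradient (φ ξ) x⟫) τ) :
    ∑ ξ, Qel k uh v δ τ (φ ξ) = 0 := by
  unfold Qel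
  rw [← integral_finsetSum _ fun ξ _ => hQint ξ, ← integral_zero E2 ℝ]
  refine integral_congr_ae (Set.EqOn.aeEq_restrict_of_aestronglyMeasurable (fun x hx => ?_)
    (integrable_finsetSum _ fun ξ _ => hQint ξ).1 aestronglyMeasurable_const)
  simp only [Finset.sum_add_distrib, ← Finset.mul_sum, ← inner_sum, hgradzero x hx,
    inner_zero_right, mul_zero, add_zero]

end PartitionOfUnity

-- `στ` is the arclength measure on `∂τ`, `nτ` its outward unit normal.
theorem stmt4_general
    (Ω : Set E2) (k f u uh : E2 → ℝ) (v : E2 → E2) (δ : ℝ)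
    (τ : Set E2)
    (φ : Fin 3 → E2 → ℝ) (α : Fin 3 → ℝ)
    (στ : Measure E2) (Γσ : Fin 3 → Measure E2) (nτ : E2 → E2)
    (hτΩ : τ ⊆ Ω)
    -- `u` solves the PDE `∇·(−k∇u + v u) = f` in `Ω`
    (hpde : ∀ x ∈ Ω, vdiv (fun y => -(k y) • gradient u y + u y • v y) x = f x)
    -- basis functions sum to one with vanishing gradient sum
    (hpartition : ∀ x ∈ τ, ∑ ξ : Fin 3, φ ξ x = 1)
    (hgradzero : ∀ x ∈ τ, ∑ ξ : Fin 3, gradient (φ ξ) x = 0)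
    -- integrability of the elemental data
    (hf : IntegrableOn f τ)
    (hFint : ∀ ξ : Fin 3,
      IntegrableOn (fun x => f x * (φ ξ x + δ * ⟪v x, gradient (φ ξ) x⟫)) τ)
    (hQint : ∀ ξ : Fin 3,
      IntegrableOn (fun x =>
        ⟪k x • gradient uh x - uh x • v x, gradient (φ ξ) x⟫
          + δ * vdiv (fun y => -(k y) • gradient uh y + uh y • v y) x
              * ⟪v x, gradient (φ ξ) x⟫) τ)
    -- the arclength measure of `∂τ` decomposes along the pieces `∂τ ∩ ∂t_ξ`
    (hστ : στ = Measure.sum (fun ξ : Fin 3 => Γσ ξ))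
    -- with the boundary condition (3.3) on each `∂τ ∩ ∂t_ξ`
    (hbc : ∀ ξ : Fin 3,
      (∫ x, ⟪-(k x) • (∑ η : Fin 3, α η • gradient (φ η) x) + uh x • v x, nτ x⟫ ∂(Γσ ξ))
        = Fel f v δ τ (φ ξ) - Qel k uh v δ τ (φ ξ))
    -- the divergence theorem holds on the triangle `τ` for `C¹` vector fields
    (hdivthm : ∀ G : E2 → E2, ContDiff ℝ 1 G →
      (∫ x in τ, vdiv G x) = ∫ x, ⟪G x, nτ x⟫ ∂στ)
    -- regularity making the true flux a `C¹` vector field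
    (hu : ContDiff ℝ 2 u) (hk : ContDiff ℝ 1 k) (hv : ContDiff ℝ 1 v)
    -- integrability of the boundary fluxes
    (hbint : Integrable (fun x =>
      ⟪-(k x) • (∑ η : Fin 3, α η • gradient (φ η) x) + uh x • v x, nτ x⟫) στ) :
    (∫ x, ⟪-(k x) • (∑ η : Fin 3, α η • gradient (φ η) x) + uh x • v x, nτ x⟫ ∂στ)
      = ∫ x, ⟪-(k x) • gradient u x + u x • v x, nτ x⟫ ∂στ := by
  set G : E2 → E2 := fun y => -(k y) • gradient u y + u y • v y
  have hG : ContDiff ℝ 1 G :=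
    (hk.neg.smul (hu.gradient (by norm_num))).add ((hu.of_le (by norm_num)).smul hv)
  have hflux : (∫ x, ⟪-(k x) • (∑ η : Fin 3, α η • gradient (φ η) x) + uh x • v x, nτ x⟫ ∂στ)
      = ∑ ξ : Fin 3, (Fel f v δ τ (φ ξ) - Qel k uh v δ τ (φ ξ)) := by
    rw [hστ] at hbint ⊢
    rw [integral_sum_measure hbint, tsum_fintype]
    exact Finset.sum_congr rfl fun ξ _ => hbc ξ
  have hdiv : (∫ x in τ, vdiv G x) = ∫ x in τ, f x :=
    integral_congr_ae (Set.EqOn.aeEq_restrict_of_aestronglyMeasurable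
      (fun x hx => hpde x (hτΩ hx)) hG.continuous_vdiv.aestronglyMeasurable hf.1)
  calc _ = ∑ ξ : Fin 3, Fel f v δ τ (φ ξ) - ∑ ξ : Fin 3, Qel k uh v δ τ (φ ξ) := by
          rw [hflux, Finset.sum_sub_distrib]
    _ = ∫ x in τ, f x := by
          rw [sum_Fel_eq_integral f v δ hpartition hgradzero hf hFint,
            sum_Qel_eq_zero k uh v δ hgradzero hQint, sub_zero]
    _ = ∫ x, ⟪G x, nτ x⟫ ∂στ := hdiv.symm.trans (hdivthm G hG)

/-- let `u` be the exact solution of `∇·(−k∇u + v u) = f` in `Ω` (with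
`u = g` on `∂Ω`), `u_h` the SUPG/CGFEM solution, and `ũ_{τ,h} = Σ_ξ α_ξ φ_ξ` the solution
of the auxiliary elemental Neumann problem on a triangle `τ ⊆ Ω`.  Then the total
post-processed flux through `∂τ` equals the true flux:
`∫_{∂τ} (−k∇ũ_{τ,h} + u_h v)·n dl = ∫_{∂τ} (−k∇u + u v)·n dl`.

Here `στ` is the arclength measure on `∂τ` with outward unit normal `nτ`, decomposed as
`στ = Σ_ξ Γσ ξ` where `Γσ ξ` is the arclength measure on `∂τ ∩ ∂t_ξ`; `t ξ` are the three
quadrilaterals subdividing `τ`, `σ ξ` is the arclength measure on `∂t_ξ` with outward unit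
normal `n ξ`, and the divergence theorem on the triangle `τ` is recorded by `hdivthm`. -/
theorem stmt4
    (Ω : Set E2) (k f u uh : E2 → ℝ) (v : E2 → E2) (δ : ℝ)
    (τ : Set E2) (t : Fin 3 → Set E2)
    (φ : Fin 3 → E2 → ℝ) (α : Fin 3 → ℝ)
    (σ : Fin 3 → Measure E2) (n : Fin 3 → E2 → E2)
    (στ : Measure E2) (Γσ : Fin 3 → Measure E2) (nτ : E2 → E2)
    (hτΩ : τ ⊆ Ω)
    -- `u` solves the PDE `∇·(−k∇u + v u) = f` in `Ω`
    (hpde : ∀ x ∈ Ω, vdiv (fun y => -(k y) • gradient u y + u y • v y) x = f x)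
    -- basis functions sum to one with vanishing gradient sum
    (hpartition : ∀ x ∈ τ, ∑ ξ : Fin 3, φ ξ x = 1)
    (hgradzero : ∀ x ∈ τ, ∑ ξ : Fin 3, gradient (φ ξ) x = 0)
    -- integrability of the elemental data
    (hf : IntegrableOn f τ)
    (hFint : ∀ ξ : Fin 3,
      IntegrableOn (fun x => f x * (φ ξ x + δ * ⟪v x, gradient (φ ξ) x⟫)) τ)
    (hQint : ∀ ξ : Fin 3,
      IntegrableOn (fun x =>
        ⟪k x • gradient uh x - uh x • v x, gradient (φ ξ) x⟫
          + δ * vdiv (fun y => -(k y) • gradient uh y + uh y • v y) x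
              * ⟪v x, gradient (φ ξ) x⟫) τ)
    -- the arclength measure of `∂τ` decomposes along the pieces `∂τ ∩ ∂t_ξ`
    (hστ : στ = Measure.sum (fun ξ : Fin 3 => Γσ ξ))
    -- `ũ_{τ,h} = Σ_ξ α_ξ φ_ξ` solves the auxiliary Neumann problem (3.2)
    (hneumann : ∀ ξ : Fin 3,
      -(∫ x, k x * ⟪∑ η : Fin 3, α η • gradient (φ η) x, n ξ x⟫ ∂(σ ξ))
        = (∫ x in t ξ, f x) - ∫ x, uh x * ⟪v x, n ξ x⟫ ∂(σ ξ))
    -- with the boundary condition (3.3) on each `∂τ ∩ ∂t_ξ`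
    (hbc : ∀ ξ : Fin 3,
      (∫ x, ⟪-(k x) • (∑ η : Fin 3, α η • gradient (φ η) x) + uh x • v x, nτ x⟫ ∂(Γσ ξ))
        = Fel f v δ τ (φ ξ) - Qel k uh v δ τ (φ ξ))
    -- the divergence theorem holds on the triangle `τ` for `C¹` vector fields
    (hdivthm : ∀ G : E2 → E2, ContDiff ℝ 1 G →
      (∫ x in τ, vdiv G x) = ∫ x, ⟪G x, nτ x⟫ ∂στ)
    -- regularity making the true flux a `C¹` vector field
    (hu : ContDiff ℝ 2 u) (hk : ContDiff ℝ 1 k) (hv : ContDiff ℝ 1 v)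
    -- integrability of the boundary fluxes
    (hbint : Integrable (fun x =>
      ⟪-(k x) • (∑ η : Fin 3, α η • gradient (φ η) x) + uh x • v x, nτ x⟫) στ)
    (htrueint : Integrable (fun x =>
      ⟪-(k x) • gradient u x + u x • v x, nτ x⟫) στ) :
    (∫ x, ⟪-(k x) • (∑ η : Fin 3, α η • gradient (φ η) x) + uh x • v x, nτ x⟫ ∂στ)
      = ∫ x, ⟪-(k x) • gradient u x + u x • v x, nτ x⟫ ∂στ :=
  stmt4_general Ω k f u uh v δ τ φ α στ Γσ nτ hτΩ hpde hpartition hgradzero hf hFint hQint hστ hbc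
    hdivthm hu hk hv hbint
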